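/- The operator D maps A into A and maps each W_m into W_m; moreover, for each m ∈ ℤ, the only subspaces of W_m invariant under both D and multiplication by u are 0 and W_m. (Proposition 5.3, part 3: there is an invariant algebraic differential operator of second order on the cone — corresponding to z(∂_x² + ∂_y²) — under which the multiplicity spaces of the SO(2)-rotation action become irreducible.) -/

import Mathlib

/-- The ring `ℂ[u, t, t⁻¹]` of polynomials in `u` that are Laurent polynomials
in `t`, realized as the monoid algebra of `ℕ × ℤ` over `ℂ`. -/
abbrev PolyLaurent : Type := AddMonoidAlgebra ℂ (ℕ × ℤ)

/-- The monomial `uⁿ tᵐ` in `ℂ[u, t, t⁻¹]`. -/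
noncomputable def mono (n : ℕ) (m : ℤ) : PolyLaurent :=
  AddMonoidAlgebra.single (n, m) 1

/-- The coordinate ring `A` of the double cone `z² = x² + y²`: the subalgebra
of `ℂ[u, t, t⁻¹]` generated by `u`, `u·t` and `u·t⁻¹`. -/
noncomputable def coneA : Subalgebra ℂ PolyLaurent :=
  Algebra.adjoin ℂ {mono 1 0, mono 1 1, mono 1 (-1)}

/-- The second-order operator `D` (corresponding to `z(∂_x² + ∂_y²)` on the
cone), determined on monomials by `D(uⁿtᵐ) = (n² − m²)·u^{n−1}tᵐ` for `n ≥ 1`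
and `D(tᵐ) = 0`; equivalently `u·D(f) = ((u∂_u − t∂_t) ∘ (u∂_u + t∂_t))(f)`. -/
noncomputable def Dop : PolyLaurent →ₗ[ℂ] PolyLaurent :=
  (AddMonoidAlgebra.coeffLinearEquiv ℂ).symm.toLinearMap ∘ₗ
  (Finsupp.lsum ℂ fun p : ℕ × ℤ =>
    (if p.1 = 0 then (0 : ℂ) else ((p.1 : ℂ) ^ 2 - (p.2 : ℂ) ^ 2)) •
      Finsupp.lsingle (p.1 - 1, p.2)) ∘ₗ
  (AddMonoidAlgebra.coeffLinearEquiv ℂ).toLinearMap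

/-- `W_m`: the span of the monomials `uⁿtᵐ` with `n ≥ |m|`, i.e. the
weight-`m` space of the rotation action `t ↦ λt` on the coordinate ring of
the cone. -/
noncomputable def coneWm (m : ℤ) : Submodule ℂ PolyLaurent :=
  Submodule.span ℂ {x : PolyLaurent | ∃ n : ℕ, m.natAbs ≤ n ∧ x = mono n m}

/-!
On coefficients, `(D f)_{n,k} = ((n+1)² − k²) f_{n+1,k}`. So `D` preserves the span of the
monomials with exponents in any set that is closed under `n+1 ↦ n`, except where `|k| = n+1`
and the factor vanishes. Both `A` (the monoid algebra of the lattice points `|m| ≤ n` of the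
cone) and `W_m` are spans of this kind.

For irreducibility, `D` is locally nilpotent, and on `W_m` its kernel is the line through
`u^{|m|} tᵐ` because `n² − m² ≠ 0` for `n > |m|`. The last nonzero `Dᵏ x` of a nonzero `x` in
a `D`-invariant `p ⊆ W_m` therefore puts `u^{|m|} tᵐ` in `p`, and multiplication by `u` then
gives all of `W_m`.
-/

open AddMonoidAlgebra

namespace AddMonoidAlgebra

variable {R M : Type*} [CommSemiring R] [AddMonoid M] {S : AddSubmonoid M}

theorem mul_mem_supported {x y : R[M]} (hx : x ∈ supported R R (S : Set M))
    (hy : y ∈ supported R R (S : Set M)) : x * y ∈ supported R R (S : Set M) := by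
  classical
  rw [mem_supported] at hx hy ⊢
  refine (Finset.coe_subset.2 (support_coeff_mul_subset x y)).trans ?_
  rw [Finset.coe_add]
  rintro _ ⟨a, ha, b, hb, rfl⟩
  exact S.add_mem (hx ha) (hy hb)

theorem one_mem_supported : (1 : R[M]) ∈ supported R R (S : Set M) :=
  (mem_supported ..).2 <|
    (Finset.coe_subset.2 support_coeff_one_subset).trans (by simp [S.zero_mem])

variable (R) in
noncomputable def supportedSubalgebra (S : AddSubmonoid M) : Subalgebra R R[M] :=
  (supported R R (S : Set M)).toSubalgebra one_mem_supported fun _ _ ↦ mul_mem_supported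

end AddMonoidAlgebra

theorem Module.End.exists_pow_apply_ne_zero_and_apply_eq_zero {R M : Type*} [Semiring R]
    [AddCommMonoid M] [Module R M] {f : Module.End R M} {x : M} (hx : x ≠ 0)
    (h : ∃ k, (f ^ k) x = 0) : ∃ k, (f ^ k) x ≠ 0 ∧ f ((f ^ k) x) = 0 := by
  classical
  have hN : Nat.find h ≠ 0 := fun h0 ↦ hx (by simpa [h0] using Nat.find_spec h)
  refine ⟨Nat.find h - 1, Nat.find_min h (by omega), ?_⟩
  rw [← Module.End.mul_apply, ← pow_succ', Nat.sub_add_cancel (Nat.pos_of_ne_zero hN)]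
  exact Nat.find_spec h

theorem Int.natCast_natAbs_sq {α : Type*} [Ring α] (m : ℤ) :
    (m.natAbs : α) ^ 2 = (m : α) ^ 2 := by
  rw [← Int.cast_natCast, ← Int.cast_pow, Int.natAbs_sq, Int.cast_pow]

theorem Int.natCast_sq_sub_intCast_sq_ne_zero {α : Type*} [Ring α] [CharZero α]
    {n : ℕ} {k : ℤ} (h : k.natAbs < n) : (n : α) ^ 2 - (k : α) ^ 2 ≠ 0 := by
  rw [← Int.natCast_natAbs_sq, sub_ne_zero]
  exact_mod_cast (Nat.pow_lt_pow_left h two_ne_zero).ne'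

theorem mono_mul (a c : ℕ) (b d : ℤ) : mono a b * mono c d = mono (a + c) (b + d) := by
  simp [mono, single_mul_single]

theorem mono_pow (k : ℕ) (d : ℤ) : mono 1 d ^ k = mono k (k * d) := by
  simp [mono, single_pow]

theorem smul_mono_eq_single (p : ℕ × ℤ) (c : ℂ) : c • mono p.1 p.2 = single p c := by
  simp [mono]

theorem coeff_mono (n : ℕ) (m : ℤ) (p : ℕ × ℤ) :
    (mono n m).coeff p = if (n, m) = p then 1 else 0 := by
  simp [mono, Finsupp.single_apply]

theorem Dop_mono (n : ℕ) (m : ℤ) :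
    Dop (mono n m) = (if n = 0 then 0 else ((n : ℂ) ^ 2 - (m : ℂ) ^ 2)) • mono (n - 1) m := by
  simp only [Dop, mono, LinearMap.comp_apply, LinearEquiv.coe_coe, coeffLinearEquiv_apply,
    coeff_single, Finsupp.lsum_single, LinearMap.smul_apply, Finsupp.lsingle_apply, map_smul,
    coeffLinearEquiv_symm_apply, ofCoeff_single]

theorem coeff_Dop (x : PolyLaurent) (n : ℕ) (k : ℤ) :
    (Dop x).coeff (n, k) = (((n : ℂ) + 1) ^ 2 - (k : ℂ) ^ 2) * x.coeff (n + 1, k) := by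
  induction x using induction_linear with
  | zero => simp
  | add x y hx hy => simp [hx, hy, mul_add]
  | single p c =>
    obtain ⟨n', k'⟩ := p
    rw [← smul_mono_eq_single, map_smul, Dop_mono]
    simp only [coeff_smul, Finsupp.smul_apply, smul_eq_mul, coeff_mono, Prod.mk.injEq]
    split_ifs <;> first | omega | simp_all [mul_comm]

theorem Dop_mem_supported {s : Set (ℕ × ℤ)}
    (hs : ∀ n k, (n + 1, k) ∈ s → (n, k) ∈ s ∨ k.natAbs = n + 1) {x : PolyLaurent}
    (hx : x ∈ supported ℂ ℂ s) : Dop x ∈ supported ℂ ℂ s := by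
  rw [mem_supported'] at hx ⊢
  rintro ⟨n, k⟩ hnk
  rw [coeff_Dop]
  by_cases h : (n + 1, k) ∈ s
  · obtain h' | h' := hs n k h
    · exact absurd h' hnk
    · rw [← Int.natCast_natAbs_sq, h']
      push_cast
      ring
  · rw [hx _ h, mul_zero]

def coneMonoid : AddSubmonoid (ℕ × ℤ) where
  carrier := {p | p.2.natAbs ≤ p.1}
  add_mem' {a b} ha hb := by
    have := Int.natAbs_add_le a.2 b.2
    simp only [Set.mem_ofPred_eq, Prod.fst_add, Prod.snd_add] at *
    omega
  zero_mem' := by simp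

def coneWeightSet (m : ℤ) : Set (ℕ × ℤ) := {p | p.2 = m ∧ m.natAbs ≤ p.1}

theorem mono_mem_coneA {n : ℕ} {m : ℤ} (h : m.natAbs ≤ n) : mono n m ∈ coneA := by
  have hgen : ∀ d : ℤ, d.natAbs ≤ 1 → mono 1 d ∈ coneA := fun d hd ↦
    Algebra.subset_adjoin (by
      obtain rfl | rfl | rfl : d = 0 ∨ d = 1 ∨ d = -1 := by omega
      all_goals simp)
  have hsign : m.sign.natAbs ≤ 1 := by
    rcases Int.sign_trichotomy m with h | h | h <;> simp [h]
  have : mono n m = mono 1 m.sign ^ m.natAbs * mono 1 0 ^ (n - m.natAbs) := by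
    rw [mono_pow, mono_pow, mono_mul, mul_zero, add_zero, Nat.add_sub_cancel' h, mul_comm,
      Int.sign_mul_natAbs]
  rw [this]
  exact mul_mem (pow_mem (hgen _ hsign) _) (pow_mem (hgen 0 (by simp)) _)

theorem coneA_eq_supportedSubalgebra : coneA = supportedSubalgebra ℂ coneMonoid := by
  refine le_antisymm (Algebra.adjoin_le ?_) fun x hx ↦ ?_
  · rintro _ (rfl | rfl | rfl) <;> exact (mem_supported' ..).2 fun p hp ↦ by
      rw [coeff_mono, if_neg]
      rintro rfl
      exact hp (by simp [coneMonoid])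
  · rw [supportedSubalgebra, Submodule.mem_toSubalgebra, supported_eq_span_single] at hx
    refine Submodule.span_le (p := Subalgebra.toSubmodule coneA) |>.2 ?_ hx
    rintro _ ⟨p, hp, rfl⟩
    exact mono_mem_coneA hp

theorem coneWm_eq_supported (m : ℤ) : coneWm m = supported ℂ ℂ (coneWeightSet m) := by
  rw [coneWm, supported_eq_span_single]
  congr 1
  ext x
  constructor
  · rintro ⟨n, hn, rfl⟩
    exact ⟨(n, m), ⟨rfl, hn⟩, rfl⟩
  · rintro ⟨⟨n, _⟩, ⟨rfl, hn⟩, rfl⟩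
    exact ⟨n, hn, rfl⟩

theorem Dop_pow_succ_mono (n : ℕ) (m : ℤ) : (Dop ^ (n + 1)) (mono n m) = 0 := by
  induction n with
  | zero => simp [Dop_mono]
  | succ n ih =>
    rw [pow_succ, Module.End.mul_apply, Dop_mono, if_neg n.succ_ne_zero, map_smul,
      Nat.add_sub_cancel, ih, smul_zero]

theorem exists_pow_Dop_apply_eq_zero (x : PolyLaurent) : ∃ k, (Dop ^ k) x = 0 := by
  suffices x ∈ Module.End.maxGenEigenspace Dop 0 by
    simpa [Module.End.mem_maxGenEigenspace] using this
  induction x using induction_linear with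
  | zero => exact zero_mem _
  | add x y hx hy => exact add_mem hx hy
  | single p c =>
    rw [← smul_mono_eq_single]
    refine Submodule.smul_mem _ c ((Module.End.mem_maxGenEigenspace ..).2 ⟨p.1 + 1, ?_⟩)
    simpa using Dop_pow_succ_mono p.1 p.2

theorem eq_smul_mono_of_Dop_eq_zero {m : ℤ} {x : PolyLaurent} (hx : x ∈ coneWm m)
    (hD : Dop x = 0) : x = x.coeff (m.natAbs, m) • mono m.natAbs m := by
  rw [coneWm_eq_supported, mem_supported'] at hx
  ext ⟨n, k⟩
  rw [coeff_smul, Finsupp.smul_apply, coeff_mono, smul_eq_mul]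
  split_ifs with h
  · simp [← h]
  · by_cases hnk : (n, k) ∈ coneWeightSet m
    · obtain ⟨rfl, hn⟩ := hnk
      obtain ⟨n, rfl⟩ : ∃ n', n = n' + 1 := ⟨n - 1, by grind⟩
      have hc := coeff_Dop x n k
      rw [hD, coeff_zero, Finsupp.coe_zero, Pi.zero_apply, eq_comm, mul_eq_zero] at hc
      rw [mul_zero]
      refine hc.resolve_left ?_
      exact_mod_cast Int.natCast_sq_sub_intCast_sq_ne_zero (n := n + 1) (by grind)
    · simp [hx _ hnk]

theorem mono_natAbs_mem_of_ne_bot {m : ℤ} {p : Submodule ℂ PolyLaurent} (hp : p ≤ coneWm m)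
    (hD : ∀ x ∈ p, Dop x ∈ p) (hne : p ≠ ⊥) : mono m.natAbs m ∈ p := by
  obtain ⟨x, hxp, hx0⟩ := (Submodule.ne_bot_iff p).1 hne
  obtain ⟨k, hk0, hk⟩ := Module.End.exists_pow_apply_ne_zero_and_apply_eq_zero hx0
    (exists_pow_Dop_apply_eq_zero x)
  have hyp : (Dop ^ k) x ∈ p := Module.End.pow_apply_mem_of_forall_mem k hD x hxp
  have hy := eq_smul_mono_of_Dop_eq_zero (hp hyp) hk
  set c := ((Dop ^ k) x).coeff (m.natAbs, m)
  have hc : c ≠ 0 := fun h ↦ hk0 (by rw [hy, h, zero_smul])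
  have := p.smul_mem c⁻¹ hyp
  rwa [hy, smul_smul, inv_mul_cancel₀ hc, one_smul] at this

theorem coneWm_le_of_mono_natAbs_mem {m : ℤ} {p : Submodule ℂ PolyLaurent}
    (hu : ∀ x ∈ p, mono 1 0 * x ∈ p) (h : mono m.natAbs m ∈ p) : coneWm m ≤ p := by
  refine Submodule.span_le.2 ?_
  rintro _ ⟨n, hn, rfl⟩
  induction n, hn using Nat.le_induction with
  | base => exact h
  | succ n _ ih => simpa [mono_mul, add_comm] using hu _ ih

/-- **Proposition 5.3, part 3.**
The invariant second-order operator `D` maps `A` into `A` and each `W_m` into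
`W_m`; moreover, for each `m ∈ ℤ`, the only subspaces of `W_m` invariant under
both `D` and multiplication by `u` are `0` and `W_m`. -/
theorem cone_rotation_multiplicity_spaces_irreducible :
    (∀ a ∈ coneA, Dop a ∈ coneA) ∧
    (∀ m : ℤ, ∀ x ∈ coneWm m, Dop x ∈ coneWm m) ∧
    (∀ m : ℤ, ∀ p : Submodule ℂ PolyLaurent, p ≤ coneWm m →
      (∀ x ∈ p, Dop x ∈ p) → (∀ x ∈ p, mono 1 0 * x ∈ p) →
      p = ⊥ ∨ p = coneWm m) := by
  refine ⟨fun a ha ↦ ?_, fun m x hx ↦ ?_, fun m p hp hD hu ↦ ?_⟩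
  · rw [coneA_eq_supportedSubalgebra] at ha ⊢
    exact Dop_mem_supported (fun n k h ↦ by simp [coneMonoid] at h ⊢; omega) ha
  · rw [coneWm_eq_supported] at hx ⊢
    exact Dop_mem_supported (fun n k h ↦ by simp [coneWeightSet] at h ⊢; omega) hx
  · rw [or_iff_not_imp_left]
    exact fun hne ↦
      le_antisymm hp (coneWm_le_of_mono_natAbs_mem hu (mono_natAbs_mem_of_ne_bot hp hD hne))
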